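/- Let $p$ be an odd prime and suppose $G\le S_{p+1}$ is a subgroup which is solvable, primitive in its natural action on $\{1,\dots,p+1\}$, and contains a permutation that is a single cycle of length $p$ (fixing exactly one point). Then $p+1$ is a power of $2$, i.e., $p$ is a Mersenne prime. -/

import Mathlib

/-!
Galois: the degree of a solvable primitive permutation group is a prime power. The last
nontrivial term `A` of the derived series is an abelian normal subgroup; in a primitive group
every nontrivial normal subgroup is transitive, and an abelian transitive group acts regularly,
so `|A|` is the degree. For a prime `q` dividing the degree, the Sylow `q`-subgroup of `A` is
again abelian, normal and nontrivial, so it too has the degree as its order. Since `p + 1` is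
even, `q = 2`.
-/

/-- A subgroup of `Sₙ` is primitive if its natural action on `{1, …, n}` is transitive
and every block of the action is trivial (a subsingleton or everything). -/
def Subgroup.IsPrimitivePerm {n : ℕ} (G : Subgroup (Equiv.Perm (Fin n))) : Prop :=
  MulAction.IsPretransitive G (Fin n) ∧
    ∀ B : Set (Fin n), MulAction.IsBlock G B → B.Subsingleton ∨ B = Set.univ

theorem Group.IsSolvable.exists_normal_isMulCommutative_ne_bot (G : Type*) [Group G]
    [IsSolvable G] [Nontrivial G] : ∃ A : Subgroup G, A.Normal ∧ IsMulCommutative A ∧ A ≠ ⊥ := by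
  classical
  have hex : ∃ n, derivedSeries G n = ⊥ := IsSolvable.solvable
  have hn0 : Nat.find hex ≠ 0 := by
    intro h
    have := Nat.find_spec hex
    rw [h, derivedSeries_zero] at this
    exact top_ne_bot this
  obtain ⟨m, hm⟩ := Nat.exists_eq_succ_of_ne_zero hn0
  refine ⟨derivedSeries G m, derivedSeries_normal G m, ?_, Nat.find_min hex (by omega)⟩
  rw [← Subgroup.commutator_self_eq_bot_iff, ← derivedSeries_succ, ← Nat.succ_eq_add_one, ← hm]
  exact Nat.find_spec hex

namespace MulAction

variable {M α : Type*} [Group M] [MulAction M α]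

theorem IsPretransitive.card_eq_of_isMulCommutative [IsMulCommutative M] [FaithfulSMul M α]
    [IsPretransitive M α] (a : α) : Nat.card M = Nat.card α := by
  refine Nat.card_eq_of_bijective (· • a) ⟨fun m m' h => ?_, surjective_smul M a⟩
  refine eq_of_smul_eq_smul (α := α) fun x => ?_
  obtain ⟨k, rfl⟩ := surjective_smul M a x
  rw [smul_smul, mul_comm' m k, mul_smul, show m • a = m' • a from h, ← mul_smul, mul_comm' k m',
    mul_smul]

theorem IsPreprimitive.isPretransitive_of_normal_of_ne_bot [FaithfulSMul M α]
    [IsPreprimitive M α] {N : Subgroup M} [N.Normal] (hN : N ≠ ⊥) : IsPretransitive N α := by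
  refine IsQuasiPreprimitive.isPretransitive_of_normal fun hfix => hN ?_
  rw [eq_bot_iff]
  intro n hn
  refine Subgroup.mem_bot.mpr (eq_of_smul_eq_smul (α := α) fun x => ?_)
  rw [one_smul]
  exact (Set.eq_univ_iff_forall.mp hfix x) ⟨n, hn⟩

theorem IsPreprimitive.card_eq_of_normal_of_isMulCommutative [FaithfulSMul M α]
    [IsPreprimitive M α] {A : Subgroup M} [A.Normal] [IsMulCommutative A] (hA : A ≠ ⊥) :
    Nat.card A = Nat.card α := by
  have := isPretransitive_of_normal_of_ne_bot (α := α) hA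
  obtain ⟨a, ha⟩ := Subgroup.ne_bot_iff_exists_ne_one.mp hA
  obtain ⟨x, -⟩ : ∃ x : α, a • x ≠ x := by
    by_contra! h
    exact ha (eq_of_smul_eq_smul (α := α) fun x => by rw [h x, one_smul])
  exact IsPretransitive.card_eq_of_isMulCommutative x

theorem IsPreprimitive.exists_prime_pow_eq_card_of_isSolvable [Finite M] [Group.IsSolvable M]
    [FaithfulSMul M α] [IsPreprimitive M α] [Nonempty α] :
    ∃ q k : ℕ, q.Prime ∧ Nat.card α = q ^ k := by
  rcases subsingleton_or_nontrivial α with hα | hα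
  · exact ⟨2, 0, Nat.prime_two, by simp⟩
  have : Finite α := .of_surjective _ (surjective_smul M (Classical.arbitrary α))
  have : Nontrivial M := by
    obtain ⟨x, y, hxy⟩ := exists_pair_ne α
    obtain ⟨g, hg⟩ := exists_smul_eq M x y
    exact ⟨g, 1, fun h => hxy (by rw [← hg, h, one_smul])⟩
  obtain ⟨A, hAn, hAc, hA⟩ := Group.IsSolvable.exists_normal_isMulCommutative_ne_bot M
  have hcardA : Nat.card α = Nat.card A := (card_eq_of_normal_of_isMulCommutative hA).symm
  obtain ⟨q, hq, hqα⟩ := Nat.exists_prime_and_dvd (Finite.one_lt_card (α := α)).ne'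
  have : Fact q.Prime := ⟨hq⟩
  -- a Sylow subgroup of the abelian group `A` is characteristic in `A`, hence normal in `M`
  let P : Sylow q A := default
  have : (P : Subgroup A).Characteristic := P.characteristic_of_normal inferInstance
  have hP : (P : Subgroup A).map A.subtype ≠ ⊥ := by
    rw [Ne, Subgroup.map_eq_bot_iff_of_injective _ A.subtype_injective]
    exact P.ne_bot_of_dvd_card (hcardA ▸ hqα)
  refine ⟨q, (Nat.card A).factorization q, hq, ?_⟩
  rw [← card_eq_of_normal_of_isMulCommutative hP, Subgroup.card_map_of_injective A.subtype_injective,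
    P.card_eq_multiplicity]

end MulAction

theorem Subgroup.IsPrimitivePerm.isPreprimitive {n : ℕ} {G : Subgroup (Equiv.Perm (Fin n))}
    (hG : G.IsPrimitivePerm) : MulAction.IsPreprimitive G (Fin n) :=
  { hG.1 with isTrivialBlock_of_isBlock := fun hB => hG.2 _ hB }

theorem mersenne_of_solvable_primitive_with_p_cycle_general (p : ℕ)
    (hodd : Odd p) (G : Subgroup (Equiv.Perm (Fin (p + 1)))) (hsolv : IsSolvable G)
    (hprim : G.IsPrimitivePerm) :
    ∃ k : ℕ, p + 1 = 2 ^ k := by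
  have := hprim.isPreprimitive
  have : Group.IsSolvable G := hsolv
  obtain ⟨q, k, hq, hcard⟩ :=
    MulAction.IsPreprimitive.exists_prime_pow_eq_card_of_isSolvable (M := G) (α := Fin (p + 1))
  rw [Nat.card_eq_fintype_card, Fintype.card_fin] at hcard
  have h2q : 2 ∣ q ^ k := hcard ▸ (Nat.even_add_one.mpr (Nat.not_even_iff_odd.mpr hodd)).two_dvd
  obtain rfl : 2 = q :=
    (Nat.prime_dvd_prime_iff_eq Nat.prime_two hq).mp (Nat.prime_two.dvd_of_dvd_pow h2q)
  exact ⟨k, hcard⟩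

/-- If an odd prime `p` admits a solvable primitive subgroup of `S_{p+1}` containing a
single cycle of length `p`, then `p + 1` is a power of `2`, i.e. `p` is a Mersenne
prime. -/
theorem mersenne_of_solvable_primitive_with_p_cycle (p : ℕ) (hp : p.Prime)
    (hodd : Odd p) (G : Subgroup (Equiv.Perm (Fin (p + 1)))) (hsolv : IsSolvable G)
    (hprim : G.IsPrimitivePerm)
    (hcyc : ∃ σ : Equiv.Perm (Fin (p + 1)), σ ∈ G ∧ σ.IsCycle ∧ σ.support.card = p) :
    ∃ k : ℕ, p + 1 = 2 ^ k :=
  mersenne_of_solvable_primitive_with_p_cycle_general p hodd G hsolv hprim
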